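/- There exists C > 0 such that ‖f‖_{EXP₂(𝕋²)} ≤ C‖f‖_{W^{1,2}(𝕋²)} for all f ∈ W^{1,2}(𝕋²), i.e. one has the continuous embedding W^{1,2}(𝕋²) ↪ EXP₂(𝕋²), where EXP₂(𝕋²) is the Orlicz space with Young function A(t) = e^{t²} − 1. -/

import Mathlib

open MeasureTheory Complex

noncomputable section

/-- The two-dimensional torus `𝕋² = ℝ²/ℤ²`. -/
abbrev T2 := UnitAddCircle × UnitAddCircle

/-- The Luxemburg norm `‖f‖_{L_A} = inf {λ > 0 : ∫_{𝕋²} A(|f|/λ) ≤ 1}`. -/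
noncomputable def luxNorm (A : ℝ → ℝ) (f : T2 → ℝ) : ℝ :=
  sInf {l : ℝ | 0 < l ∧ ∫ x : T2, A (|f x| / l) ≤ 1}

/-- Membership in the Orlicz space `L_A(𝕋²)`. -/
def MemOrlicz (A : ℝ → ℝ) (f : T2 → ℝ) : Prop :=
  AEStronglyMeasurable f volume ∧
  ∃ l : ℝ, 0 < l ∧ Integrable (fun x : T2 => A (|f x| / l)) volume ∧
    (∫ x : T2, A (|f x| / l)) ≤ 1

/-- The Young function `A(t) = e^{t²} − 1` of the Orlicz space `EXP₂`. -/
noncomputable def Aexp2 (t : ℝ) : ℝ := Real.exp (t ^ 2) - 1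

/-- The Young function `A(t) = t (log(e+t))^{1/2}` of the Zygmund space `L log^{1/2} L`. -/
noncomputable def AlogHalf (t : ℝ) : ℝ := t * Real.sqrt (Real.log (Real.exp 1 + t))

/-- The Young function `A(t) = t log(e+t)` of the Zygmund space `L log L`. -/
noncomputable def Alog (t : ℝ) : ℝ := t * Real.log (Real.exp 1 + t)

/-- The Fourier coefficient `c_k(f) = ∫_{𝕋²} f(x) e^{-2πi k·x} dx` of a
real-valued function. -/
noncomputable def fcR (f : T2 → ℝ) (k : ℤ × ℤ) : ℂ :=
  ∫ x : T2, (fourier (-k.1) x.1) * (fourier (-k.2) x.2) * (f x : ℂ)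

/-- The summand family of the (Fourier-side) squared `W^{1,2}(𝕋²)` norm
`∑_k (1 + |k|²) |c_k(f)|²`. -/
noncomputable def sobFamily (f : T2 → ℝ) (k : ℤ × ℤ) : ℝ :=
  (1 + ((k.1 : ℝ) ^ 2 + (k.2 : ℝ) ^ 2)) * ‖fcR f k‖ ^ 2

/-- The squared `W^{1,2}(𝕋²)` norm, computed on the Fourier side. -/
noncomputable def sobNormSq (f : T2 → ℝ) : ℝ := ∑' k : ℤ × ℤ, sobFamily f k

/-- Membership in the Sobolev space `W^{1,2}(𝕋²)`. -/
def MemW12 (f : T2 → ℝ) : Prop :=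
  MemLp f 2 volume ∧ Summable (sobFamily f)

namespace Trud

open scoped ComplexConjugate ENNReal
open Submodule Set

lemma volume_eq_haar : (volume : Measure UnitAddCircle) = AddCircle.haarAddCircle := by
  rw [AddCircle.volume_eq_smul_haarAddCircle, ENNReal.ofReal_one, one_smul]

instance : IsProbabilityMeasure (volume : Measure UnitAddCircle) := by
  rw [volume_eq_haar]; infer_instance

instance : IsProbabilityMeasure (volume : Measure T2) := by
  rw [MeasureTheory.Measure.volume_eq_prod]; infer_instance

lemma integral_fourier (n : ℤ) :
    ∫ x : UnitAddCircle, fourier n x = if n = 0 then 1 else 0 := by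
  have h := orthonormal_iff_ite.mp (@orthonormal_fourier 1 ⟨one_pos⟩) 0 n
  rw [ContinuousMap.inner_toLp] at h
  have h2 : ∀ x : UnitAddCircle, fourier n x * conj (fourier 0 x) = fourier n x := by
    intro x; rw [fourier_zero]; simp
  simp only [h2] at h
  rw [volume_eq_haar]
  simpa [eq_comm] using h

def eC (k : ℤ × ℤ) : C(T2, ℂ) :=
  ((fourier k.1).comp ⟨Prod.fst, continuous_fst⟩) *
  ((fourier k.2).comp ⟨Prod.snd, continuous_snd⟩)

lemma eC_apply (k : ℤ × ℤ) (x : T2) : eC k x = fourier k.1 x.1 * fourier k.2 x.2 := rfl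

lemma integral_eC (k : ℤ × ℤ) :
    ∫ x : T2, eC k x = if k = 0 then 1 else 0 := by
  have h1 : ∫ x : T2, eC k x
      = (∫ x : UnitAddCircle, fourier k.1 x) * ∫ x : UnitAddCircle, fourier k.2 x := by
    simp only [eC_apply]
    rw [MeasureTheory.Measure.volume_eq_prod]
    exact integral_prod_mul _ _
  rw [h1, integral_fourier, integral_fourier]
  rcases eq_or_ne k 0 with hk | hk
  · simp [hk, Prod.ext_iff]
  · have : k.1 ≠ 0 ∨ k.2 ≠ 0 := by
      by_contra h; push_neg at h
      exact hk (Prod.ext h.1 h.2)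
    rcases this with h | h <;> simp [h, hk]

lemma conj_eC (k : ℤ × ℤ) (x : T2) : conj (eC k x) = eC (-k) x := by
  simp only [eC_apply, map_mul, Prod.fst_neg, Prod.snd_neg]
  rw [fourier_neg, fourier_neg]

lemma eC_mul (j k : ℤ × ℤ) : eC j * eC k = eC (j + k) := by
  ext x
  simp only [ContinuousMap.mul_apply, eC_apply, Prod.fst_add, Prod.snd_add, fourier_add]
  ring

lemma eC_zero : eC 0 = 1 := by
  ext x
  simp [eC_apply, fourier_zero]

def E2 (k : ℤ × ℤ) : Lp ℂ 2 (volume : Measure T2) :=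
  ContinuousMap.toLp (E := ℂ) 2 volume ℂ (eC k)

lemma coeFn_E2 (k : ℤ × ℤ) : E2 k =ᵐ[(volume : Measure T2)] eC k :=
  ContinuousMap.coeFn_toLp volume (eC k)

lemma E2_eq_toLp (k : ℤ × ℤ) :
    E2 k = ContinuousMap.toLp (E := ℂ) 2 volume ℂ (eC k) := rfl

lemma orthonormal_E2 : Orthonormal ℂ E2 := by
  rw [orthonormal_iff_ite]
  intro i j
  rw [E2, E2, ContinuousMap.inner_toLp]
  have h2 : ∀ x : T2, eC j x * conj (eC i x) = eC (-i + j) x := by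
    intro x; rw [conj_eC, mul_comm, ← ContinuousMap.mul_apply, eC_mul]
  simp only [h2]
  rw [integral_eC]
  congr 1
  simp [neg_add_eq_zero]

/-- The star subalgebra generated by the `eC k`. -/
def eCSubalgebra : StarSubalgebra ℂ C(T2, ℂ) where
  toSubalgebra := Algebra.adjoin ℂ (Set.range eC)
  star_mem' := by
    show Algebra.adjoin ℂ (range eC) ≤ star (Algebra.adjoin ℂ (range eC))
    refine Algebra.adjoin_le ?_
    rintro - ⟨k, rfl⟩
    refine Algebra.subset_adjoin ⟨-k, ?_⟩
    ext1 x
    show eC (-k) x = conj (eC k x)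
    rw [conj_eC]

theorem eCSubalgebra_coe :
    Subalgebra.toSubmodule eCSubalgebra.toSubalgebra = span ℂ (range eC) := by
  apply Algebra.adjoin_eq_span_of_subset
  refine Subset.trans ?_ Submodule.subset_span
  intro x hx
  refine Submonoid.closure_induction (fun _ => id) ⟨0, eC_zero⟩ ?_ hx
  rintro - - - - ⟨m, rfl⟩ ⟨n, rfl⟩
  exact ⟨m + n, (eC_mul m n).symm⟩

theorem eCSubalgebra_separatesPoints : eCSubalgebra.SeparatesPoints := by
  intro x y hxy
  have hne : x.1 ≠ y.1 ∨ x.2 ≠ y.2 := by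
    by_contra h; push_neg at h
    exact hxy (Prod.ext h.1 h.2)
  rcases hne with h | h
  · refine ⟨_, ⟨eC (1, 0), Algebra.subset_adjoin ⟨(1, 0), rfl⟩, rfl⟩, ?_⟩
    simp only [eC_apply, fourier_one, fourier_zero, mul_one]
    intro hc
    rw [Circle.coe_inj] at hc
    exact h (AddCircle.injective_toCircle one_ne_zero hc)
  · refine ⟨_, ⟨eC (0, 1), Algebra.subset_adjoin ⟨(0, 1), rfl⟩, rfl⟩, ?_⟩
    simp only [eC_apply, fourier_one, fourier_zero, one_mul]
    intro hc
    rw [Circle.coe_inj] at hc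
    exact h (AddCircle.injective_toCircle one_ne_zero hc)

theorem eCSubalgebra_closure_eq_top : eCSubalgebra.topologicalClosure = ⊤ :=
  ContinuousMap.starSubalgebra_topologicalClosure_eq_top_of_separatesPoints eCSubalgebra
    eCSubalgebra_separatesPoints

theorem span_eC_closure_eq_top : (span ℂ (range eC)).topologicalClosure = ⊤ := by
  rw [← eCSubalgebra_coe]
  exact congr_arg (Subalgebra.toSubmodule <| StarSubalgebra.toSubalgebra ·)
    eCSubalgebra_closure_eq_top

theorem span_E2_closure_eq_top : (span ℂ (range E2)).topologicalClosure = ⊤ := by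
  convert
    (ContinuousMap.toLp_denseRange ℂ (volume : Measure T2) ℂ
      (by norm_num : (2 : ℝ≥0∞) ≠ ∞)).topologicalClosure_map_submodule span_eC_closure_eq_top
  case e'_3 => rfl
  erw [map_span, range_comp]
  simp only [ContinuousLinearMap.coe_coe]

def B2 : HilbertBasis (ℤ × ℤ) ℂ (Lp ℂ 2 (volume : Measure T2)) :=
  HilbertBasis.mk orthonormal_E2 (by rw [span_E2_closure_eq_top])

lemma B2_coe : ⇑B2 = E2 := HilbertBasis.coe_mk _ _


local notation "⟪" x ", " y "⟫" => @inner ℂ _ _ x y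

lemma parseval (x : Lp ℂ 2 (volume : Measure T2)) :
    HasSum (fun k => ‖(⟪E2 k, x⟫ : ℂ)‖ ^ 2) (‖x‖ ^ 2) := by
  have h := B2.hasSum_inner_mul_inner x x
  rw [B2_coe] at h
  have hterm : (fun k => (⟪x, E2 k⟫ : ℂ) * ⟪E2 k, x⟫)
      = fun k => ((‖(⟪E2 k, x⟫ : ℂ)‖ ^ 2 : ℝ) : ℂ) := by
    funext k
    rw [← inner_conj_symm, RCLike.conj_mul]
    norm_cast
  rw [hterm] at h
  have hx : (⟪x, x⟫ : ℂ) = ((‖x‖ ^ 2 : ℝ) : ℂ) := by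
    rw [inner_self_eq_norm_sq_to_K]; norm_cast
  rw [hx] at h
  exact hasSum_ofReal.mp h

lemma inner_E2_toLp (f : T2 → ℝ) (hf : MemLp (fun x => (f x : ℂ)) 2 (volume : Measure T2))
    (k : ℤ × ℤ) : (⟪E2 k, hf.toLp _⟫ : ℂ) = fcR f k := by
  rw [MeasureTheory.L2.inner_def, fcR]
  apply integral_congr_ae
  filter_upwards [coeFn_E2 k, hf.coeFn_toLp] with x h1 h2
  rw [h1, h2, RCLike.inner_apply]
  show _ * conj (fourier k.1 x.1 * fourier k.2 x.2) = _
  rw [map_mul, ← fourier_neg, ← fourier_neg]; ring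

lemma tail_hasSum (x : Lp ℂ 2 (volume : Measure T2)) (s : Finset (ℤ × ℤ)) :
    HasSum (fun k => if k ∈ s then 0 else ‖(⟪E2 k, x⟫ : ℂ)‖ ^ 2)
      (‖x - ∑ k ∈ s, (⟪E2 k, x⟫ : ℂ) • E2 k‖ ^ 2) := by
  have h := parseval (x - ∑ k ∈ s, (⟪E2 k, x⟫ : ℂ) • E2 k)
  have hinner : ∀ j, (⟪E2 j, x - ∑ k ∈ s, (⟪E2 k, x⟫ : ℂ) • E2 k⟫ : ℂ)
      = if j ∈ s then 0 else ⟪E2 j, x⟫ := by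
    intro j
    rw [inner_sub_right, inner_sum]
    have h2 : ∀ k ∈ s, (⟪E2 j, (⟪E2 k, x⟫ : ℂ) • E2 k⟫ : ℂ)
        = if k = j then ⟪E2 j, x⟫ else 0 := by
      intro k _
      rw [inner_smul_right, orthonormal_iff_ite.mp orthonormal_E2 j k]
      rcases eq_or_ne k j with rfl | hkj
      · simp
      · simp [hkj, Ne.symm hkj]
    rw [Finset.sum_congr rfl h2, Finset.sum_ite_eq' s j (fun _ => (⟪E2 j, x⟫ : ℂ))]
    split_ifs <;> ring
  have hfun : (fun j => ‖(⟪E2 j, x - ∑ k ∈ s, (⟪E2 k, x⟫ : ℂ) • E2 k⟫ : ℂ)‖ ^ 2)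
      = fun j => if j ∈ s then 0 else ‖(⟪E2 j, x⟫ : ℂ)‖ ^ 2 := by
    funext j
    rw [hinner j]
    split_ifs <;> simp
  rwa [hfun] at h


def w (k : ℤ × ℤ) : ℝ := 1 + ((k.1 : ℝ) ^ 2 + (k.2 : ℝ) ^ 2)

lemma w_pos (k : ℤ × ℤ) : 0 < w k := by
  have : 0 ≤ (k.1 : ℝ) ^ 2 + (k.2 : ℝ) ^ 2 := by positivity
  unfold w; linarith

lemma sobFamily_eq (f : T2 → ℝ) (k : ℤ × ℤ) : sobFamily f k = w k * ‖fcR f k‖ ^ 2 := rfl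

lemma sobFamily_nonneg (f : T2 → ℝ) (k : ℤ × ℤ) : 0 ≤ sobFamily f k := by
  rw [sobFamily_eq]; exact mul_nonneg (w_pos k).le (by positivity)

lemma norm_fcR_sq_le (f : T2 → ℝ) (k : ℤ × ℤ) : ‖fcR f k‖ ^ 2 ≤ sobFamily f k := by
  rw [sobFamily_eq]
  have hw : 1 ≤ w k := by
    unfold w; nlinarith [sq_nonneg ((k.1:ℝ)), sq_nonneg ((k.2:ℝ))]
  nlinarith [sq_nonneg ‖fcR f k‖]

def sq2 (M : ℕ) : Finset (ℤ × ℤ) := Finset.Icc (-(M : ℤ)) M ×ˢ Finset.Icc (-(M : ℤ)) M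

lemma zero_mem_sq2 (M : ℕ) : (0 : ℤ × ℤ) ∈ sq2 M := by
  simp only [sq2, Finset.mem_product, Finset.mem_Icc, Prod.fst_zero, Prod.snd_zero]
  omega

lemma D_bound (M : ℕ) (hM : 1 ≤ M) :
    ∑ k ∈ sq2 M, (w k)⁻¹ ≤ 13 * (1 + Real.log M) := by
  classical
  have hlog : (0 : ℝ) ≤ Real.log M := Real.log_nonneg (by exact_mod_cast hM)
  have hsplit : ∑ k ∈ sq2 M, (w k)⁻¹
      = (w 0)⁻¹ + ∑ k ∈ (sq2 M).erase 0, (w k)⁻¹ :=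
    (Finset.add_sum_erase _ _ (zero_mem_sq2 M)).symm
  have hw0 : (w (0 : ℤ × ℤ))⁻¹ = 1 := by norm_num [w]
  set ν : ℤ × ℤ → ℕ := fun k => max k.1.natAbs k.2.natAbs with hν
  have hmaps : ∀ k ∈ (sq2 M).erase 0, ν k ∈ Finset.Icc 1 M := by
    intro k hk
    rw [Finset.mem_erase] at hk
    obtain ⟨hk0, hkmem⟩ := hk
    rw [sq2, Finset.mem_product, Finset.mem_Icc, Finset.mem_Icc] at hkmem
    rw [Finset.mem_Icc]
    have h1 : k.1 ≠ 0 ∨ k.2 ≠ 0 := by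
      by_contra h; push_neg at h; exact hk0 (Prod.ext h.1 h.2)
    constructor
    · rcases h1 with h | h
      · exact le_trans (by omega) (le_max_left k.1.natAbs k.2.natAbs)
      · exact le_trans (by omega) (le_max_right k.1.natAbs k.2.natAbs)
    · exact max_le (by omega) (by omega)
  have hfib := Finset.sum_fiberwise_of_maps_to hmaps (fun k => (w k)⁻¹)
  have hfiber_bound : ∀ m ∈ Finset.Icc 1 M,
      ∑ k ∈ (sq2 M).erase 0 |>.filter (fun k => ν k = m), (w k)⁻¹ ≤ 12 * (m : ℝ)⁻¹ := by
    intro m hm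
    rw [Finset.mem_Icc] at hm
    obtain ⟨hm1, hmM⟩ := hm
    have hmR : (0:ℝ) < m := by exact_mod_cast hm1
    -- termwise bound
    have hterm : ∀ k ∈ (sq2 M).erase 0 |>.filter (fun k => ν k = m),
        (w k)⁻¹ ≤ ((m:ℝ) ^ 2)⁻¹ := by
      intro k hk
      rw [Finset.mem_filter] at hk
      have hkm : max k.1.natAbs k.2.natAbs = m := hk.2
      have hnat : m ^ 2 ≤ k.1.natAbs ^ 2 + k.2.natAbs ^ 2 := by
        rcases max_choice k.1.natAbs k.2.natAbs with h | h
        · have : k.1.natAbs = m := h.symm.trans hkm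
          rw [← this]; exact Nat.le_add_right _ _
        · have : k.2.natAbs = m := h.symm.trans hkm
          rw [← this]; exact Nat.le_add_left _ _
      have hcast : ((m:ℝ)) ^ 2 ≤ (k.1.natAbs : ℝ) ^ 2 + (k.2.natAbs : ℝ) ^ 2 := by
        exact_mod_cast hnat
      have h1 : ((k.1.natAbs : ℝ)) ^ 2 = (k.1 : ℝ) ^ 2 := by
        rw [Nat.cast_natAbs, Int.cast_abs, _root_.sq_abs]
      have h2 : ((k.2.natAbs : ℝ)) ^ 2 = (k.2 : ℝ) ^ 2 := by
        rw [Nat.cast_natAbs, Int.cast_abs, _root_.sq_abs]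
      rw [h1, h2] at hcast
      apply inv_anti₀ (by positivity)
      unfold w; linarith
    have hcard : ((sq2 M).erase 0 |>.filter (fun k => ν k = m)).card ≤ 12 * m := by
      have hsub : ((sq2 M).erase 0 |>.filter (fun k => ν k = m)) ⊆
          ({-(m:ℤ), (m:ℤ)} ×ˢ Finset.Icc (-(m:ℤ)) m) ∪
          (Finset.Icc (-(m:ℤ)) m ×ˢ {-(m:ℤ), (m:ℤ)}) := by
        intro k hk
        rw [Finset.mem_filter] at hk
        have hkm : max k.1.natAbs k.2.natAbs = m := hk.2
        have hle1 : k.1.natAbs ≤ m := hkm ▸ le_max_left _ _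
        have hle2 : k.2.natAbs ≤ m := hkm ▸ le_max_right _ _
        have heq : k.1.natAbs = m ∨ k.2.natAbs = m := by
          rcases max_choice k.1.natAbs k.2.natAbs with h | h
          · exact Or.inl (h.symm.trans hkm)
          · exact Or.inr (h.symm.trans hkm)
        rw [Finset.mem_union, Finset.mem_product, Finset.mem_product]
        rcases heq with h | h
        · left
          constructor
          · simp only [Finset.mem_insert, Finset.mem_singleton]; omega
          · rw [Finset.mem_Icc]; omega
        · right
          constructor
          · rw [Finset.mem_Icc]; omega
          · simp only [Finset.mem_insert, Finset.mem_singleton]; omega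
      have hcardA : ({-(m:ℤ), (m:ℤ)} ×ˢ Finset.Icc (-(m:ℤ)) m).card = 2 * (2 * m + 1) := by
        rw [Finset.card_product, Int.card_Icc]
        have h2 : ({-(m:ℤ), (m:ℤ)} : Finset ℤ).card = 2 := by
          rw [Finset.card_insert_of_notMem (by simp; omega), Finset.card_singleton]
        rw [h2]
        omega
      have hcardB : (Finset.Icc (-(m:ℤ)) m ×ˢ ({-(m:ℤ), (m:ℤ)} : Finset ℤ)).card
          = (2 * m + 1) * 2 := by
        rw [Finset.card_product, Int.card_Icc]
        have h2 : ({-(m:ℤ), (m:ℤ)} : Finset ℤ).card = 2 := by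
          rw [Finset.card_insert_of_notMem (by simp; omega), Finset.card_singleton]
        rw [h2]
        omega
      calc ((sq2 M).erase 0 |>.filter (fun k => ν k = m)).card
          ≤ _ := Finset.card_le_card hsub
        _ ≤ _ := Finset.card_union_le _ _
        _ ≤ 12 * m := by rw [hcardA, hcardB]; omega
    calc ∑ k ∈ (sq2 M).erase 0 |>.filter (fun k => ν k = m), (w k)⁻¹
        ≤ ((sq2 M).erase 0 |>.filter (fun k => ν k = m)).card • ((m:ℝ) ^ 2)⁻¹ :=
          Finset.sum_le_card_nsmul _ _ _ hterm
      _ = (((sq2 M).erase 0 |>.filter (fun k => ν k = m)).card : ℝ) * ((m:ℝ) ^ 2)⁻¹ := by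
          rw [nsmul_eq_mul]
      _ ≤ (12 * m : ℝ) * ((m:ℝ) ^ 2)⁻¹ := by
          apply mul_le_mul_of_nonneg_right _ (by positivity)
          exact_mod_cast hcard
      _ = 12 * (m : ℝ)⁻¹ := by field_simp
  have hrest : ∑ k ∈ (sq2 M).erase 0, (w k)⁻¹ ≤ 12 * (1 + Real.log M) := by
    rw [← hfib]
    calc ∑ m ∈ Finset.Icc 1 M, ∑ k ∈ (sq2 M).erase 0 |>.filter (fun k => ν k = m), (w k)⁻¹
        ≤ ∑ m ∈ Finset.Icc 1 M, 12 * (m : ℝ)⁻¹ := Finset.sum_le_sum hfiber_bound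
      _ = 12 * ∑ m ∈ Finset.Icc 1 M, ((m:ℕ) : ℝ)⁻¹ := by rw [Finset.mul_sum]
      _ = 12 * (harmonic M : ℝ) := by
          congr 1
          rw [harmonic_eq_sum_Icc]
          push_cast
          rfl
      _ ≤ 12 * (1 + Real.log M) := by
          have := harmonic_le_one_add_log M
          linarith
  rw [hsplit, hw0]
  linarith

/-- Cauchy–Schwarz bound for the `ℓ¹` sum of Fourier coefficients over a block. -/
lemma sum_norm_fcR_le (f : T2 → ℝ) (hs : Summable (sobFamily f)) (s : Finset (ℤ × ℤ)) :
    (∑ k ∈ s, ‖fcR f k‖) ^ 2 ≤ (∑ k ∈ s, (w k)⁻¹) * sobNormSq f := by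
  have key : ∀ k, ‖fcR f k‖ = Real.sqrt ((w k)⁻¹) * Real.sqrt (sobFamily f k) := by
    intro k
    rw [← Real.sqrt_mul (inv_nonneg.mpr (w_pos k).le), sobFamily_eq, ← mul_assoc,
      inv_mul_cancel₀ (w_pos k).ne', one_mul, Real.sqrt_sq (norm_nonneg _)]
  calc (∑ k ∈ s, ‖fcR f k‖) ^ 2
      = (∑ k ∈ s, Real.sqrt ((w k)⁻¹) * Real.sqrt (sobFamily f k)) ^ 2 := by
        congr 1; exact Finset.sum_congr rfl fun k _ => key k
    _ ≤ (∑ k ∈ s, Real.sqrt ((w k)⁻¹) ^ 2) * ∑ k ∈ s, Real.sqrt (sobFamily f k) ^ 2 :=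
        Finset.sum_mul_sq_le_sq_mul_sq s _ _
    _ = (∑ k ∈ s, (w k)⁻¹) * ∑ k ∈ s, sobFamily f k := by
        congr 1
        · exact Finset.sum_congr rfl fun k _ => Real.sq_sqrt (inv_nonneg.mpr (w_pos k).le)
        · exact Finset.sum_congr rfl fun k _ => Real.sq_sqrt (sobFamily_nonneg f k)
    _ ≤ (∑ k ∈ s, (w k)⁻¹) * sobNormSq f := by
        apply mul_le_mul_of_nonneg_left _ (Finset.sum_nonneg fun k _ => (inv_nonneg.mpr (w_pos k).le))
        exact Summable.sum_le_tsum s (fun k _ => sobFamily_nonneg f k) hs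


def gam : ℝ := 1 / 100000000

lemma gam_pos : 0 < gam := by norm_num [gam]

lemma exp_sub_exp_le {x y : ℝ} (h : y ≤ x) :
    Real.exp x - Real.exp y ≤ (x - y) * Real.exp x := by
  have key : Real.exp (y - x) * Real.exp x = Real.exp y := by
    rw [← Real.exp_add]; ring_nf
  nlinarith [Real.add_one_le_exp (y - x), Real.exp_pos x]

lemma exp_two_le_eight : Real.exp 2 ≤ 8 := by
  have h := Real.exp_one_lt_d9
  have h2 : Real.exp 2 = Real.exp 1 ^ 2 := by
    rw [← Real.exp_nat_mul]; norm_num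
  nlinarith [Real.exp_pos 1]

def tailTerm (n : ℕ) : ℝ :=
  (Real.exp (gam * ((n : ℝ) + 1) ^ 2) - Real.exp (gam * (n : ℝ) ^ 2)) *
    (8 * Real.exp (-(n : ℝ) ^ 2 / 104))

lemma gam_exp_mono (n : ℕ) : gam * (n : ℝ) ^ 2 ≤ gam * ((n : ℝ) + 1) ^ 2 := by
  have h0 : (0:ℝ) ≤ (n:ℝ) := Nat.cast_nonneg n
  nlinarith [gam_pos]

lemma tailTerm_nonneg (n : ℕ) : 0 ≤ tailTerm n := by
  unfold tailTerm
  have h : Real.exp (gam * (n : ℝ) ^ 2) ≤ Real.exp (gam * ((n : ℝ) + 1) ^ 2) :=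
    Real.exp_le_exp.mpr (gam_exp_mono n)
  have := Real.exp_pos (-(n : ℝ) ^ 2 / 104)
  nlinarith

def r0 : ℝ := Real.exp (-(1 / 208 : ℝ))

lemma r0_pos : 0 < r0 := Real.exp_pos _

lemma r0_lt_one : r0 < 1 := by
  rw [r0, Real.exp_lt_one_iff]; norm_num

lemma one_sub_r0 : (1 : ℝ) / 209 ≤ 1 - r0 := by
  have h := Real.add_one_le_exp (1 / 208 : ℝ)
  have hpos : (0:ℝ) < 1 + 1/208 := by norm_num
  have h2 : r0 ≤ (1 + 1/208 : ℝ)⁻¹ := by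
    rw [r0, Real.exp_neg]
    exact inv_anti₀ hpos (by linarith)
  have h3 : ((1:ℝ) + 1/208)⁻¹ = 208/209 := by norm_num
  rw [h3] at h2
  linarith

def bnd (n : ℕ) : ℝ := 24 * gam * (2 * (n : ℝ) + 1) * r0 ^ n

lemma tailTerm_le (n : ℕ) : tailTerm n ≤ bnd n := by
  have h0 : (0:ℝ) ≤ (n:ℝ) := Nat.cast_nonneg n
  have hd : Real.exp (gam * ((n:ℝ)+1)^2) - Real.exp (gam * (n:ℝ)^2)
      ≤ gam * (2*(n:ℝ)+1) * Real.exp (gam * ((n:ℝ)+1)^2) := by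
    have h := exp_sub_exp_le (gam_exp_mono n)
    have hxy : gam * ((n:ℝ)+1)^2 - gam * (n:ℝ)^2 = gam * (2*(n:ℝ)+1) := by ring
    rw [hxy] at h
    exact h
  have hexp : Real.exp (gam * ((n:ℝ)+1)^2) * Real.exp (-(n:ℝ)^2/104) ≤ 3 * r0 ^ n := by
    rw [← Real.exp_add]
    have hn : (n:ℝ) ≤ (n:ℝ)^2 := by
      rcases Nat.eq_zero_or_pos n with h | h
      · subst h; norm_num
      · have : (1:ℝ) ≤ (n:ℝ) := by exact_mod_cast h
        nlinarith
    have harg : gam * ((n:ℝ)+1)^2 + (-(n:ℝ)^2/104) ≤ 1/208 + (n:ℝ) * (-(1/208)) := by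
      rw [gam]
      nlinarith [sq_nonneg ((n:ℝ) - 1)]
    calc Real.exp (gam * ((n:ℝ)+1)^2 + (-(n:ℝ)^2/104))
        ≤ Real.exp (1/208 + (n:ℝ) * (-(1/208))) := Real.exp_le_exp.mpr harg
      _ = Real.exp (1/208) * Real.exp ((n:ℝ) * (-(1/208))) := Real.exp_add _ _
      _ ≤ 3 * r0 ^ n := by
          rw [Real.exp_nat_mul]
          apply mul_le_mul_of_nonneg_right _ (by positivity)
          have h1 : Real.exp (1/208 : ℝ) ≤ Real.exp 1 := Real.exp_le_exp.mpr (by norm_num)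
          have h2 := Real.exp_one_lt_d9
          linarith
  have h8 : (0:ℝ) ≤ 8 * (gam * (2*(n:ℝ)+1)) := by nlinarith [gam_pos]
  calc tailTerm n
      ≤ (gam * (2*(n:ℝ)+1) * Real.exp (gam * ((n:ℝ)+1)^2)) * (8 * Real.exp (-(n:ℝ)^2/104)) := by
        unfold tailTerm
        exact mul_le_mul_of_nonneg_right hd (by positivity)
    _ = 8 * (gam * (2*(n:ℝ)+1)) * (Real.exp (gam * ((n:ℝ)+1)^2) * Real.exp (-(n:ℝ)^2/104)) := by
        ring
    _ ≤ 8 * (gam * (2*(n:ℝ)+1)) * (3 * r0 ^ n) := mul_le_mul_of_nonneg_left hexp h8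
    _ = bnd n := by unfold bnd; ring

lemma norm_r0_lt_one : ‖r0‖ < 1 := by
  rw [Real.norm_eq_abs, abs_of_pos r0_pos]; exact r0_lt_one

lemma summable_n_r0 : Summable (fun n : ℕ => (n:ℝ) * r0 ^ n) := by
  have h := summable_pow_mul_geometric_of_norm_lt_one (k := 1) (R := ℝ) norm_r0_lt_one
  refine h.congr fun n => by simp

lemma summable_bnd : Summable bnd := by
  have h := (summable_n_r0.mul_left (48 * gam)).add
    ((summable_geometric_of_lt_one r0_pos.le r0_lt_one).mul_left (24 * gam))
  refine h.congr fun n => ?_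
  unfold bnd; ring

lemma tsum_bnd_le : ∑' n, bnd n ≤ 1 := by
  have hbnd : ∀ n : ℕ, bnd n = 48 * gam * ((n:ℝ) * r0 ^ n) + 24 * gam * r0 ^ n := by
    intro n; unfold bnd; ring
  rw [tsum_congr hbnd, Summable.tsum_add (summable_n_r0.mul_left _)
    ((summable_geometric_of_lt_one r0_pos.le r0_lt_one).mul_left _),
    tsum_mul_left, tsum_mul_left,
    tsum_coe_mul_geometric_of_norm_lt_one norm_r0_lt_one,
    tsum_geometric_of_lt_one r0_pos.le r0_lt_one]
  have hs := one_sub_r0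
  have hA : r0 / (1 - r0)^2 ≤ 43681 := by
    rw [div_le_iff₀ (by nlinarith)]
    nlinarith [r0_lt_one, r0_pos, sq_nonneg (1 - r0 - 1/209)]
  have hB : (1 - r0)⁻¹ ≤ 209 := by
    have h := inv_anti₀ (by norm_num : (0:ℝ) < 1/209) hs
    simpa using h
  have hg := gam_pos
  calc 48 * gam * (r0 / (1 - r0)^2) + 24 * gam * (1 - r0)⁻¹
      ≤ 48 * gam * 43681 + 24 * gam * 209 := by
        have h1 : 48 * gam * (r0 / (1 - r0)^2) ≤ 48 * gam * 43681 :=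
          mul_le_mul_of_nonneg_left hA (by linarith)
        have h2 : 24 * gam * (1 - r0)⁻¹ ≤ 24 * gam * 209 :=
          mul_le_mul_of_nonneg_left hB (by linarith)
        linarith
    _ ≤ 1 := by rw [gam]; norm_num

lemma summable_tailTerm : Summable tailTerm :=
  Summable.of_nonneg_of_le tailTerm_nonneg tailTerm_le summable_bnd

lemma tsum_tailTerm_le : ∑' n, tailTerm n ≤ 1 :=
  le_trans (Summable.tsum_le_tsum tailTerm_le summable_tailTerm summable_bnd) tsum_bnd_le


lemma norm_fourier (n : ℤ) (x : UnitAddCircle) : ‖fourier n x‖ = 1 := by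
  rw [fourier_apply]
  exact Circle.norm_coe _

lemma norm_eC_apply (k : ℤ × ℤ) (x : T2) : ‖eC k x‖ = 1 := by
  rw [eC_apply, norm_mul, norm_fourier, norm_fourier, one_mul]

lemma sobNormSq_nonneg (f : T2 → ℝ) : 0 ≤ sobNormSq f :=
  tsum_nonneg (sobFamily_nonneg f)

lemma sup_bound (f : T2 → ℝ) (hsum : Summable (sobFamily f)) (hS1 : sobNormSq f ≤ 1)
    (M : ℕ) (hM : 1 ≤ M) (x : T2) :
    ‖(∑ k ∈ sq2 M, fcR f k • eC k : C(T2, ℂ)) x‖ ≤ Real.sqrt (13 * (1 + Real.log M)) := by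
  have hsum_norm : ‖(∑ k ∈ sq2 M, fcR f k • eC k : C(T2, ℂ)) x‖ ≤ ∑ k ∈ sq2 M, ‖fcR f k‖ := by
    rw [ContinuousMap.coe_sum, Finset.sum_apply]
    refine le_trans (norm_sum_le _ _) (le_of_eq (Finset.sum_congr rfl fun k _ => ?_))
    rw [ContinuousMap.smul_apply, norm_smul, norm_eC_apply, mul_one]
  have hD0 : 0 ≤ ∑ k ∈ sq2 M, (w k)⁻¹ :=
    Finset.sum_nonneg fun k _ => inv_nonneg.mpr (w_pos k).le
  have hsq : (∑ k ∈ sq2 M, ‖fcR f k‖) ^ 2 ≤ 13 * (1 + Real.log M) := by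
    calc (∑ k ∈ sq2 M, ‖fcR f k‖) ^ 2
        ≤ (∑ k ∈ sq2 M, (w k)⁻¹) * sobNormSq f := sum_norm_fcR_le f hsum _
      _ ≤ (∑ k ∈ sq2 M, (w k)⁻¹) * 1 := mul_le_mul_of_nonneg_left hS1 hD0
      _ ≤ 13 * (1 + Real.log M) := by rw [mul_one]; exact D_bound M hM
  have hnn : 0 ≤ ∑ k ∈ sq2 M, ‖fcR f k‖ := Finset.sum_nonneg fun k _ => norm_nonneg _
  have hy : (0:ℝ) ≤ 13 * (1 + Real.log M) := by
    nlinarith [Real.log_nonneg (show (1:ℝ) ≤ (M:ℝ) by exact_mod_cast hM)]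
  exact le_trans hsum_norm ((Real.le_sqrt hnn hy).mpr hsq)

lemma w_large {M : ℕ} {k : ℤ × ℤ} (hk : k ∉ sq2 M) : ((M : ℝ)) ^ 2 ≤ w k := by
  rw [sq2, Finset.mem_product] at hk
  have h : M < k.1.natAbs ∨ M < k.2.natAbs := by
    rcases not_and_or.mp hk with h | h
    · left; rw [Finset.mem_Icc] at h; omega
    · right; rw [Finset.mem_Icc] at h; omega
  have hcast : ∀ j : ℤ, M < j.natAbs → ((M : ℝ)) ^ 2 ≤ (j : ℝ) ^ 2 := by
    intro j hj
    have h1 : (M : ℝ) ^ 2 ≤ ((j.natAbs : ℕ) : ℝ) ^ 2 := by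
      have : (M:ℝ) ≤ (j.natAbs : ℝ) := by exact_mod_cast hj.le
      have hM0 : (0:ℝ) ≤ (M:ℝ) := Nat.cast_nonneg M
      nlinarith
    have h2 : ((j.natAbs : ℕ) : ℝ) ^ 2 = (j : ℝ) ^ 2 := by
      rw [Nat.cast_natAbs, Int.cast_abs, _root_.sq_abs]
    linarith
  unfold w
  rcases h with h | h
  · have := hcast k.1 h; nlinarith [sq_nonneg ((k.2 : ℝ))]
  · have := hcast k.2 h; nlinarith [sq_nonneg ((k.1 : ℝ))]

lemma tail_bound (f : T2 → ℝ) (hf2 : MemLp f 2 (volume : Measure T2))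
    (hsum : Summable (sobFamily f)) (hS1 : sobNormSq f ≤ 1) (M : ℕ) (hM : 1 ≤ M) :
    ‖MemLp.toLp (fun x => (f x : ℂ)) hf2.ofReal - ∑ k ∈ sq2 M, fcR f k • E2 k‖ ≤ (M : ℝ)⁻¹ := by
  have hMR : (0:ℝ) < (M:ℝ) := by exact_mod_cast hM
  set F := MemLp.toLp (fun x => (f x : ℂ)) hf2.ofReal with hF
  have hcoef : ∀ k, (⟪E2 k, F⟫ : ℂ) = fcR f k := fun k => inner_E2_toLp f hf2.ofReal k
  have ht : HasSum (fun k => if k ∈ sq2 M then 0 else ‖fcR f k‖ ^ 2)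
      (‖F - ∑ k ∈ sq2 M, fcR f k • E2 k‖ ^ 2) := by
    have := tail_hasSum F (sq2 M)
    simpa only [hcoef] using this
  have hle : ∀ k, (if k ∈ sq2 M then 0 else ‖fcR f k‖ ^ 2)
      ≤ ((M:ℝ) ^ 2)⁻¹ * sobFamily f k := by
    intro k
    split_ifs with hk
    · exact mul_nonneg (inv_nonneg.mpr (by positivity)) (sobFamily_nonneg f k)
    · have hw := w_large hk
      have h1 : (M:ℝ)^2 * ‖fcR f k‖^2 ≤ w k * ‖fcR f k‖^2 :=
        mul_le_mul_of_nonneg_right hw (by positivity)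
      calc ‖fcR f k‖ ^ 2 = ((M:ℝ)^2)⁻¹ * ((M:ℝ)^2 * ‖fcR f k‖^2) := by
            field_simp
        _ ≤ ((M:ℝ)^2)⁻¹ * (w k * ‖fcR f k‖^2) :=
            mul_le_mul_of_nonneg_left h1 (inv_nonneg.mpr (by positivity))
        _ = ((M:ℝ)^2)⁻¹ * sobFamily f k := by rw [sobFamily_eq]
  have hts := Summable.tsum_le_tsum hle ht.summable (hsum.mul_left _)
  rw [ht.tsum_eq, tsum_mul_left] at hts
  have hsq : ‖F - ∑ k ∈ sq2 M, fcR f k • E2 k‖ ^ 2 ≤ ((M:ℝ)⁻¹) ^ 2 := by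
    have h2 : ((M:ℝ)^2)⁻¹ * sobNormSq f ≤ ((M:ℝ)^2)⁻¹ :=
      le_trans (mul_le_mul_of_nonneg_left hS1 (inv_nonneg.mpr (by positivity))) (by rw [mul_one])
    rw [inv_pow]
    exact le_trans hts h2
  calc ‖F - ∑ k ∈ sq2 M, fcR f k • E2 k‖
      = Real.sqrt (‖F - ∑ k ∈ sq2 M, fcR f k • E2 k‖ ^ 2) :=
        (Real.sqrt_sq (norm_nonneg _)).symm
    _ ≤ Real.sqrt (((M:ℝ)⁻¹) ^ 2) := Real.sqrt_le_sqrt hsq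
    _ = (M:ℝ)⁻¹ := Real.sqrt_sq (inv_nonneg.mpr hMR.le)

set_option maxHeartbeats 2000000 in
lemma meas_large (f : T2 → ℝ) (hf2 : MemLp f 2 (volume : Measure T2))
    (hsum : Summable (sobFamily f)) (hS1 : sobNormSq f ≤ 1) (n : ℕ) (hn : 15 ≤ n) :
    volume {x : T2 | (n : ℝ) ≤ |f x|} ≤ ENNReal.ofReal (8 * Real.exp (-(n:ℝ) ^ 2 / 104)) := by
  have hnR : (15:ℝ) ≤ (n:ℝ) := by exact_mod_cast hn
  set a : ℝ := (n:ℝ) ^ 2 / 104 with ha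
  have ha0 : 0 ≤ a := by positivity
  set M := ⌈Real.exp a⌉₊ with hMdef
  have hM1 : 1 ≤ M := Nat.one_le_iff_ne_zero.mpr (Nat.ceil_pos.mpr (Real.exp_pos a)).ne'
  have hMge : Real.exp a ≤ (M:ℝ) := Nat.le_ceil _
  have hMpos : (0:ℝ) < M := lt_of_lt_of_le (Real.exp_pos a) hMge
  have hlogM : Real.log M ≤ a + 1 := by
    have hMlt : (M:ℝ) < Real.exp a + 1 := Nat.ceil_lt_add_one (Real.exp_pos a).le
    have hexp : Real.exp a + 1 ≤ Real.exp (a + 1) := by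
      rw [Real.exp_add]
      nlinarith [Real.add_one_le_exp (1:ℝ), Real.one_le_exp ha0]
    calc Real.log M ≤ Real.log (Real.exp (a + 1)) :=
          Real.log_le_log hMpos (by linarith)
      _ = a + 1 := Real.log_exp _
  have hD : 13 * (1 + Real.log M) ≤ ((n:ℝ) / 2) ^ 2 := by
    rw [ha] at hlogM
    nlinarith
  have hu : ∀ x : T2, ‖(∑ k ∈ sq2 M, fcR f k • eC k : C(T2,ℂ)) x‖ ≤ (n:ℝ) / 2 := by
    intro x
    refine le_trans (sup_bound f hsum hS1 M hM1 x) ?_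
    calc Real.sqrt (13 * (1 + Real.log M)) ≤ Real.sqrt (((n:ℝ)/2) ^ 2) := Real.sqrt_le_sqrt hD
      _ = (n:ℝ)/2 := Real.sqrt_sq (by linarith)
  set F := MemLp.toLp (fun x => (f x : ℂ)) hf2.ofReal with hF
  set G := F - ∑ k ∈ sq2 M, fcR f k • E2 k with hG
  have hGnorm : ‖G‖ ≤ (M:ℝ)⁻¹ := tail_bound f hf2 hsum hS1 M hM1
  have hae : ∀ᵐ x ∂(volume : Measure T2),
      (⇑G) x = (f x : ℂ) - (∑ k ∈ sq2 M, fcR f k • eC k : C(T2,ℂ)) x := by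
    have h1 : ⇑G =ᵐ[volume] ⇑F - ⇑(∑ k ∈ sq2 M, fcR f k • E2 k : Lp ℂ 2 volume) :=
      Lp.coeFn_sub _ _
    have h2 : ⇑F =ᵐ[volume] fun x => (f x : ℂ) := MemLp.coeFn_toLp _
    have h3 : (∑ k ∈ sq2 M, fcR f k • E2 k : Lp ℂ 2 volume)
        = ContinuousMap.toLp (E := ℂ) 2 volume ℂ (∑ k ∈ sq2 M, fcR f k • eC k) := by
      rw [map_sum]
      exact Finset.sum_congr rfl fun k _ => by rw [_root_.map_smul, E2_eq_toLp]
    have h4 : ⇑(∑ k ∈ sq2 M, fcR f k • E2 k : Lp ℂ 2 volume)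
        =ᵐ[volume] ⇑(∑ k ∈ sq2 M, fcR f k • eC k : C(T2,ℂ)) := by
      rw [h3]; exact ContinuousMap.coeFn_toLp _ _
    filter_upwards [h1, h2, h4] with x e1 e2 e4
    rw [e1, Pi.sub_apply, e2, e4]
  have hincl : volume {x : T2 | (n:ℝ) ≤ |f x|}
      ≤ volume {x : T2 | (n:ℝ)/2 ≤ ‖(⇑G) x‖} := by
    apply measure_mono_ae
    filter_upwards [hae] with x hx hmem
    have hmem' : (n:ℝ) ≤ |f x| := hmem
    show ((n:ℝ)/2) ≤ ‖(⇑G) x‖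
    have h5 : |f x| = ‖((f x : ℝ) : ℂ)‖ := by
      rw [Complex.norm_real, Real.norm_eq_abs]
    have h6 : ‖((f x : ℝ) : ℂ)‖ ≤ ‖(⇑G) x‖ + ‖(∑ k ∈ sq2 M, fcR f k • eC k : C(T2,ℂ)) x‖ := by
      calc ‖((f x : ℝ) : ℂ)‖
          = ‖(⇑G) x + (∑ k ∈ sq2 M, fcR f k • eC k : C(T2,ℂ)) x‖ := by rw [hx]; ring_nf
        _ ≤ _ := norm_add_le _ _
    have h7 := hu x
    rw [← h5] at h6
    linarith
  have hne : ENNReal.ofReal ((n:ℝ)/2) ≠ 0 := by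
    rw [Ne, ENNReal.ofReal_eq_zero]; push_neg; linarith
  have hcheb := meas_ge_le_mul_pow_eLpNorm_enorm (volume : Measure T2) two_ne_zero ENNReal.ofNat_ne_top
      (Lp.aestronglyMeasurable G) hne (fun h => absurd h ENNReal.ofReal_ne_top)
  have hset : {x : T2 | ENNReal.ofReal ((n:ℝ)/2) ≤ ‖(⇑G) x‖ₑ}
      = {x : T2 | (n:ℝ)/2 ≤ ‖(⇑G) x‖} := by
    ext x
    simp only [Set.mem_setOf_eq, ← ofReal_norm]
    exact ENNReal.ofReal_le_ofReal_iff (norm_nonneg _)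
  rw [hset] at hcheb
  have hsnorm : eLpNorm (⇑G) 2 (volume : Measure T2) = ENNReal.ofReal ‖G‖ := by
    rw [Lp.norm_def, ENNReal.ofReal_toReal (Lp.eLpNorm_ne_top G)]
  rw [hsnorm] at hcheb
  have htoReal : ((2:ℝ≥0∞)).toReal = 2 := by norm_num
  rw [htoReal] at hcheb
  have hrw : (ENNReal.ofReal ((n:ℝ)/2))⁻¹ ^ (2:ℝ) * ENNReal.ofReal ‖G‖ ^ (2:ℝ)
      = ENNReal.ofReal ((((n:ℝ)/2)⁻¹) ^ 2 * ‖G‖ ^ 2) := by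
    rw [← ENNReal.ofReal_inv_of_pos (by linarith : (0:ℝ) < (n:ℝ)/2)]
    rw [show ((2:ℝ)) = ((2:ℕ) : ℝ) by norm_num]
    rw [ENNReal.rpow_natCast, ENNReal.rpow_natCast]
    rw [← ENNReal.ofReal_pow (by positivity), ← ENNReal.ofReal_pow (norm_nonneg _)]
    rw [← ENNReal.ofReal_mul (by positivity)]
  rw [hrw] at hcheb
  refine le_trans hincl (le_trans hcheb (ENNReal.ofReal_le_ofReal ?_))
  -- real estimate
  have hGn : 0 ≤ ‖G‖ := norm_nonneg G
  have hMinv : (M:ℝ)⁻¹ ≤ Real.exp (-a) := by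
    rw [Real.exp_neg]
    exact inv_anti₀ (Real.exp_pos a) hMge
  have hG2 : ‖G‖ ^ 2 ≤ Real.exp (-a) ^ 2 := by
    have h1 : ‖G‖ ≤ Real.exp (-a) := le_trans hGnorm hMinv
    nlinarith [Real.exp_pos (-a)]
  have hexp2 : Real.exp (-a) ^ 2 = Real.exp (2 * (-a)) := by
    rw [show (2:ℝ) * (-a) = ((2:ℕ):ℝ) * (-a) by norm_num, Real.exp_nat_mul]
  have h52 : (2:ℝ) * (-a) ≤ -(n:ℝ)^2 / 104 := by
    rw [ha]; nlinarith
  have hmono : Real.exp (2 * (-a)) ≤ Real.exp (-(n:ℝ)^2 / 104) := Real.exp_le_exp.mpr h52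
  have hinv2 : (((n:ℝ)/2)⁻¹) ^ 2 ≤ 1 := by
    have h1 : (((n:ℝ)/2)⁻¹) ≤ 1 := inv_le_one_of_one_le₀ (by linarith)
    have h0 : (0:ℝ) ≤ ((n:ℝ)/2)⁻¹ := inv_nonneg.mpr (by linarith)
    calc (((n:ℝ)/2)⁻¹) ^ 2 ≤ 1 ^ 2 := pow_le_pow_left₀ h0 h1 2
      _ = 1 := one_pow 2
  calc (((n:ℝ)/2)⁻¹) ^ 2 * ‖G‖ ^ 2
      ≤ 1 * Real.exp (-a) ^ 2 := mul_le_mul hinv2 hG2 (by positivity) one_pos.le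
    _ = Real.exp (2 * (-a)) := by rw [one_mul, hexp2]
    _ ≤ Real.exp (-(n:ℝ)^2 / 104) := hmono
    _ ≤ 8 * Real.exp (-(n:ℝ)^2 / 104) := by nlinarith [Real.exp_pos (-(n:ℝ)^2 / 104)]

lemma meas_all (f : T2 → ℝ) (hf2 : MemLp f 2 (volume : Measure T2))
    (hsum : Summable (sobFamily f)) (hS1 : sobNormSq f ≤ 1) (n : ℕ) :
    volume {x : T2 | (n : ℝ) ≤ |f x|} ≤ ENNReal.ofReal (8 * Real.exp (-(n:ℝ) ^ 2 / 104)) := by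
  rcases lt_or_ge n 15 with h | h
  · have hn14 : (n:ℝ) ≤ 14 := by exact_mod_cast Nat.lt_succ_iff.mp h
    have h104 : (n:ℝ)^2 / 104 ≤ 2 := by nlinarith [Nat.cast_nonneg (α := ℝ) n]
    have hexp8 : Real.exp ((n:ℝ)^2 / 104) ≤ 8 :=
      le_trans (Real.exp_le_exp.mpr h104) exp_two_le_eight
    have h1 : (1:ℝ) ≤ 8 * Real.exp (-(n:ℝ)^2 / 104) := by
      rw [show -(n:ℝ)^2 / 104 = -((n:ℝ)^2 / 104) by ring, Real.exp_neg]
      have hp := Real.exp_pos ((n:ℝ)^2 / 104)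
      have h2 : Real.exp ((n:ℝ)^2 / 104) * (Real.exp ((n:ℝ)^2 / 104))⁻¹ = 1 :=
        mul_inv_cancel₀ hp.ne'
      nlinarith [mul_nonneg (sub_nonneg.mpr hexp8) (inv_nonneg.mpr hp.le)]
    calc volume {x : T2 | (n : ℝ) ≤ |f x|} ≤ 1 := prob_le_one
      _ ≤ ENNReal.ofReal (8 * Real.exp (-(n:ℝ) ^ 2 / 104)) := by
          rw [← ENNReal.ofReal_one]; exact ENNReal.ofReal_le_ofReal h1
  · exact meas_large f hf2 hsum hS1 n h

lemma lintegral_exp_le (f : T2 → ℝ) (hsm : StronglyMeasurable f)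
    (hf2 : MemLp f 2 (volume : Measure T2)) (hsum : Summable (sobFamily f))
    (hS1 : sobNormSq f ≤ 1) :
    ∫⁻ x : T2, ENNReal.ofReal (Real.exp (gam * f x ^ 2)) ≤ 2 := by
  have hd_nonneg : ∀ n : ℕ, (0:ℝ) ≤ Real.exp (gam * ((n:ℝ)+1)^2) - Real.exp (gam * (n:ℝ)^2) :=
    fun n => sub_nonneg.mpr (Real.exp_le_exp.mpr (gam_exp_mono n))
  have hmeas : ∀ n : ℕ, MeasurableSet {y : T2 | (n:ℝ) ≤ |f y|} :=
    fun n => measurableSet_le measurable_const hsm.measurable.abs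
  have hpt : ∀ x : T2, ENNReal.ofReal (Real.exp (gam * f x ^ 2))
      ≤ 1 + ∑' n : ℕ, ENNReal.ofReal (Real.exp (gam * ((n:ℝ)+1)^2) - Real.exp (gam * (n:ℝ)^2))
          * ({y : T2 | (n:ℝ) ≤ |f y|}.indicator (fun _ => (1:ℝ≥0∞)) x) := by
    intro x
    set N := ⌊|f x|⌋₊ with hN
    have h1 : Real.exp (gam * f x ^ 2) ≤ Real.exp (gam * ((N:ℝ)+1)^2) := by
      apply Real.exp_le_exp.mpr
      apply mul_le_mul_of_nonneg_left _ gam_pos.le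
      have hfl : |f x| < (N:ℝ) + 1 := Nat.lt_floor_add_one _
      calc f x ^ 2 = |f x| ^ 2 := (_root_.sq_abs _).symm
        _ ≤ ((N:ℝ)+1)^2 := by nlinarith [abs_nonneg (f x)]
    have h2 : (1:ℝ) + ∑ n ∈ Finset.range (N+1),
        (Real.exp (gam * ((n:ℝ)+1)^2) - Real.exp (gam * (n:ℝ)^2))
        = Real.exp (gam * ((N:ℝ)+1)^2) := by
      have h := Finset.sum_range_sub (fun m : ℕ => Real.exp (gam * (m:ℝ)^2)) (N+1)
      beta_reduce at h
      have hterm : ∀ m ∈ Finset.range (N+1),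
          Real.exp (gam * ((m+1 : ℕ):ℝ)^2) - Real.exp (gam * (m:ℝ)^2)
          = Real.exp (gam * ((m:ℝ)+1)^2) - Real.exp (gam * (m:ℝ)^2) := by
        intro m _
        push_cast
        ring_nf
      rw [Finset.sum_congr rfl hterm] at h
      have e1 : Real.exp (gam * (((N+1:ℕ)):ℝ)^2) = Real.exp (gam * ((N:ℝ)+1)^2) := by
        push_cast; ring_nf
      have e0 : Real.exp (gam * ((0:ℕ):ℝ)^2) = 1 := by norm_num
      rw [e1, e0] at h
      linarith
    calc ENNReal.ofReal (Real.exp (gam * f x ^ 2))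
        ≤ ENNReal.ofReal (Real.exp (gam * ((N:ℝ)+1)^2)) := ENNReal.ofReal_le_ofReal h1
      _ = ENNReal.ofReal (1 + ∑ n ∈ Finset.range (N+1),
            (Real.exp (gam * ((n:ℝ)+1)^2) - Real.exp (gam * (n:ℝ)^2))) := by rw [h2]
      _ = 1 + ∑ n ∈ Finset.range (N+1), ENNReal.ofReal
            (Real.exp (gam * ((n:ℝ)+1)^2) - Real.exp (gam * (n:ℝ)^2)) := by
          rw [ENNReal.ofReal_add (by norm_num) (Finset.sum_nonneg fun n _ => hd_nonneg n),
            ENNReal.ofReal_one, ENNReal.ofReal_sum_of_nonneg (fun n _ => hd_nonneg n)]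
      _ = 1 + ∑ n ∈ Finset.range (N+1), ENNReal.ofReal
            (Real.exp (gam * ((n:ℝ)+1)^2) - Real.exp (gam * (n:ℝ)^2))
            * ({y : T2 | (n:ℝ) ≤ |f y|}.indicator (fun _ => (1:ℝ≥0∞)) x) := by
          congr 1
          refine Finset.sum_congr rfl fun n hn => ?_
          have hind : x ∈ {y : T2 | (n:ℝ) ≤ |f y|} := by
            rw [Finset.mem_range] at hn
            simp only [Set.mem_setOf_eq]
            calc (n:ℝ) ≤ (N:ℝ) := by exact_mod_cast Nat.lt_succ_iff.mp hn
              _ ≤ |f x| := Nat.floor_le (abs_nonneg _)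
          rw [Set.indicator_of_mem hind, mul_one]
      _ ≤ 1 + ∑' n : ℕ, ENNReal.ofReal
            (Real.exp (gam * ((n:ℝ)+1)^2) - Real.exp (gam * (n:ℝ)^2))
            * ({y : T2 | (n:ℝ) ≤ |f y|}.indicator (fun _ => (1:ℝ≥0∞)) x) :=
          add_le_add_right (ENNReal.sum_le_tsum _) 1
  calc ∫⁻ x : T2, ENNReal.ofReal (Real.exp (gam * f x ^ 2))
      ≤ ∫⁻ x : T2, (1 + ∑' n : ℕ, ENNReal.ofReal
          (Real.exp (gam * ((n:ℝ)+1)^2) - Real.exp (gam * (n:ℝ)^2))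
          * ({y : T2 | (n:ℝ) ≤ |f y|}.indicator (fun _ => (1:ℝ≥0∞)) x)) :=
        lintegral_mono hpt
    _ = 1 + ∑' n : ℕ, ENNReal.ofReal
          (Real.exp (gam * ((n:ℝ)+1)^2) - Real.exp (gam * (n:ℝ)^2))
          * volume {y : T2 | (n:ℝ) ≤ |f y|} := by
        rw [lintegral_add_left measurable_const, lintegral_const, one_mul, measure_univ]
        congr 1
        rw [lintegral_tsum fun n => ((measurable_const.indicator (hmeas n)).const_mul _).aemeasurable]
        refine tsum_congr fun n => ?_
        rw [lintegral_const_mul _ (measurable_const.indicator (hmeas n)),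
          lintegral_indicator (hmeas n), setLIntegral_one]
    _ ≤ 1 + ∑' n : ℕ, ENNReal.ofReal
          (Real.exp (gam * ((n:ℝ)+1)^2) - Real.exp (gam * (n:ℝ)^2))
          * ENNReal.ofReal (8 * Real.exp (-(n:ℝ) ^ 2 / 104)) := by
        refine add_le_add_right (ENNReal.tsum_le_tsum fun n => ?_) 1
        exact mul_le_mul_right (meas_all f hf2 hsum hS1 n) _
    _ = 1 + ∑' n : ℕ, ENNReal.ofReal (tailTerm n) := by
        congr 1
        refine tsum_congr fun n => ?_
        rw [← ENNReal.ofReal_mul (hd_nonneg n)]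
        rfl
    _ ≤ 1 + 1 := by
        refine add_le_add_right ?_ 1
        rw [← ENNReal.ofReal_tsum_of_nonneg tailTerm_nonneg summable_tailTerm]
        calc ENNReal.ofReal (∑' n, tailTerm n) ≤ ENNReal.ofReal 1 :=
            ENNReal.ofReal_le_ofReal tsum_tailTerm_le
          _ = 1 := ENNReal.ofReal_one
    _ = 2 := one_add_one_eq_two

lemma fcR_congr {f g : T2 → ℝ} (h : f =ᵐ[(volume : Measure T2)] g) : fcR f = fcR g := by
  funext k
  exact integral_congr_ae (h.mono fun x hx => by dsimp only; rw [hx])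

lemma fcR_const_mul (c : ℝ) (f : T2 → ℝ) (k : ℤ × ℤ) :
    fcR (fun x => c * f x) k = (c : ℂ) * fcR f k := by
  unfold fcR
  rw [← integral_const_mul]
  refine integral_congr_ae (Filter.Eventually.of_forall fun x => ?_)
  push_cast
  ring

lemma sobFamily_const_mul (c : ℝ) (f : T2 → ℝ) (k : ℤ × ℤ) :
    sobFamily (fun x => c * f x) k = c ^ 2 * sobFamily f k := by
  rw [sobFamily_eq, sobFamily_eq, fcR_const_mul, norm_mul]
  have hn : ‖(c:ℂ)‖ = |c| := by rw [Complex.norm_real, Real.norm_eq_abs]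
  rw [hn, mul_pow, _root_.sq_abs]
  ring

lemma ae_zero_of_sobNormSq_eq_zero (f : T2 → ℝ) (hf2 : MemLp f 2 (volume : Measure T2))
    (hsum : Summable (sobFamily f)) (hS : sobNormSq f = 0) :
    f =ᵐ[(volume : Measure T2)] 0 := by
  set F := MemLp.toLp (fun x => (f x : ℂ)) hf2.ofReal with hF
  have hcoef : ∀ k, (⟪E2 k, F⟫ : ℂ) = fcR f k := fun k => inner_E2_toLp f hf2.ofReal k
  have hp := parseval F
  have hle : ∀ k, ‖(⟪E2 k, F⟫ : ℂ)‖ ^ 2 ≤ sobFamily f k := fun k => by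
    rw [hcoef]; exact norm_fcR_sq_le f k
  have h1 : ‖F‖ ^ 2 ≤ sobNormSq f := by
    rw [← hp.tsum_eq]
    exact Summable.tsum_le_tsum hle hp.summable hsum
  rw [hS] at h1
  have hF0 : F = 0 := by
    have h2 : ‖F‖ = 0 := by nlinarith [norm_nonneg F]
    exact norm_eq_zero.mp h2
  have h2 : (fun x => (f x : ℂ)) =ᵐ[(volume : Measure T2)] 0 := by
    have ha : ⇑F =ᵐ[(volume : Measure T2)] (fun x => (f x : ℂ)) := MemLp.coeFn_toLp _
    rw [hF0] at ha
    exact ha.symm.trans (Lp.coeFn_zero ℂ 2 (volume : Measure T2))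
  filter_upwards [h2] with x hx
  have hfx : (f x : ℂ) = 0 := hx
  exact_mod_cast hfx

lemma main_bound (f : T2 → ℝ) (hf2 : MemLp f 2 (volume : Measure T2))
    (hsum : Summable (sobFamily f)) (hSpos : 0 < sobNormSq f) :
    Integrable (fun x : T2 => Aexp2 (|f x| / (10000 * Real.sqrt (sobNormSq f)))) volume ∧
    (∫ x : T2, Aexp2 (|f x| / (10000 * Real.sqrt (sobNormSq f)))) ≤ 1 := by
  set S := sobNormSq f with hSdef
  have hS0 : 0 ≤ S := sobNormSq_nonneg f
  have hsqrtpos : 0 < Real.sqrt S := Real.sqrt_pos.mpr hSpos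
  set c : ℝ := (Real.sqrt S)⁻¹ with hc
  set f' := hf2.aestronglyMeasurable.mk f with hf'def
  have hsm' : StronglyMeasurable f' := hf2.aestronglyMeasurable.stronglyMeasurable_mk
  have hff' : f =ᵐ[(volume : Measure T2)] f' := hf2.aestronglyMeasurable.ae_eq_mk
  set g : T2 → ℝ := fun x => c * f' x with hg
  have hg2 : MemLp g 2 (volume : Measure T2) := (hf2.ae_eq hff').const_mul c
  have hgm : StronglyMeasurable g := stronglyMeasurable_const.mul hsm'
  have hfc' : fcR f' = fcR f := fcR_congr hff'.symm
  have hc2 : c ^ 2 = S⁻¹ := by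
    rw [hc, inv_pow, Real.sq_sqrt hS0]
  have hsobg : ∀ k, sobFamily g k = S⁻¹ * sobFamily f k := by
    intro k
    rw [hg, sobFamily_const_mul, hc2, sobFamily_eq, sobFamily_eq, hfc']
  have hsumg : Summable (sobFamily g) := by
    refine (hsum.mul_left S⁻¹).congr fun k => ?_
    rw [hsobg k]
  have hSg : sobNormSq g ≤ 1 := by
    unfold sobNormSq
    rw [tsum_congr hsobg, tsum_mul_left]
    have ht : (∑' k : ℤ × ℤ, sobFamily f k) = S := rfl
    rw [ht, inv_mul_cancel₀ hSpos.ne']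
  have hlin := lintegral_exp_le g hgm hg2 hsumg hSg
  set l : ℝ := 10000 * Real.sqrt S with hldef
  have hl : 0 < l := by positivity
  have hl2 : l ^ 2 = 100000000 * S := by
    rw [hldef, mul_pow, Real.sq_sqrt hS0]; norm_num
  have hptx : ∀ x : T2, f x = f' x → (|f x| / l) ^ 2 = gam * g x ^ 2 := by
    intro x hx
    rw [hg]
    simp only []
    rw [div_pow, _root_.sq_abs, hl2, ← hx, mul_pow, hc2, gam]
    field_simp
  have hlin2 : ∫⁻ x : T2, ENNReal.ofReal (Real.exp ((|f x| / l) ^ 2)) ≤ 2 := by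
    refine le_trans (le_of_eq (lintegral_congr_ae ?_)) hlin
    filter_upwards [hff'] with x hx
    rw [hptx x hx]
  set φ : T2 → ℝ := fun x => Real.exp ((|f x| / l) ^ 2) with hφ
  have hφm : AEStronglyMeasurable φ (volume : Measure T2) := by
    have hcont : Continuous fun t : ℝ => Real.exp ((|t| / l) ^ 2) :=
      Real.continuous_exp.comp ((_root_.continuous_abs.div_const l).pow 2)
    exact hcont.comp_aestronglyMeasurable hf2.aestronglyMeasurable
  have hφnn : 0 ≤ᵐ[(volume : Measure T2)] φ :=
    Filter.Eventually.of_forall fun x => (Real.exp_pos _).le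
  have hφint : Integrable φ (volume : Measure T2) := by
    refine ⟨hφm, ?_⟩
    rw [hasFiniteIntegral_iff_ofReal hφnn]
    exact lt_of_le_of_lt hlin2 (by norm_num)
  have hφle : ∫ x : T2, φ x ≤ 2 := by
    rw [integral_eq_lintegral_of_nonneg_ae hφnn hφm]
    calc (∫⁻ x : T2, ENNReal.ofReal (φ x)).toReal ≤ ((2:ℝ≥0∞)).toReal :=
        ENNReal.toReal_mono (by norm_num) hlin2
      _ = 2 := by norm_num
  have heq : (fun x : T2 => Aexp2 (|f x| / l)) = fun x => φ x - 1 := rfl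
  have hint1 : ∫ x : T2, (1:ℝ) = 1 := by simp
  constructor
  · rw [heq]
    exact hφint.sub (integrable_const 1)
  · have h2 : ∫ x : T2, Aexp2 (|f x| / l) = (∫ x : T2, φ x) - ∫ x : T2, (1:ℝ) := by
      rw [heq]
      exact integral_sub hφint (integrable_const 1)
    rw [h2, hint1]
    linarith


end Trud

/-- **Trudinger embedding `W^{1,2}(𝕋²) ↪ EXP₂(𝕋²)`**: there is a constant
`C > 0` such that `‖f‖_{EXP₂(𝕋²)} ≤ C ‖f‖_{W^{1,2}(𝕋²)}` for all
`f ∈ W^{1,2}(𝕋²)`. -/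
theorem trudinger_embedding :
    ∃ C : ℝ, 0 < C ∧ ∀ f : T2 → ℝ, MemW12 f →
      MemOrlicz Aexp2 f ∧ luxNorm Aexp2 f ≤ C * Real.sqrt (sobNormSq f) := by
  refine ⟨10000, by norm_num, fun f hf => ?_⟩
  obtain ⟨hf2, hsum⟩ := hf
  have hS0 : 0 ≤ sobNormSq f := Trud.sobNormSq_nonneg f
  have hbdd : BddBelow {l : ℝ | 0 < l ∧ (∫ x : T2, Aexp2 (|f x| / l)) ≤ 1} :=
    ⟨0, fun l hl => hl.1.le⟩
  rcases eq_or_lt_of_le hS0 with hS | hS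
  · -- degenerate case `sobNormSq f = 0`
    have hzero : f =ᵐ[(volume : Measure T2)] 0 :=
      Trud.ae_zero_of_sobNormSq_eq_zero f hf2 hsum hS.symm
    have hint : ∀ l : ℝ, 0 < l →
        (fun x : T2 => Aexp2 (|f x| / l)) =ᵐ[(volume : Measure T2)] 0 := by
      intro l _
      filter_upwards [hzero] with x hx
      have hx0 : f x = 0 := hx
      simp [Aexp2, hx0]
    have hInt : ∀ l : ℝ, 0 < l → Integrable (fun x : T2 => Aexp2 (|f x| / l)) volume :=
      fun l hl => (integrable_zero _ _ _).congr (hint l hl).symm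
    have hIle : ∀ l : ℝ, 0 < l → (∫ x : T2, Aexp2 (|f x| / l)) ≤ 1 := by
      intro l hl
      rw [integral_congr_ae (hint l hl)]
      simp
    refine ⟨⟨hf2.aestronglyMeasurable, 1, one_pos, hInt 1 one_pos, hIle 1 one_pos⟩, ?_⟩
    have hle : ∀ ε : ℝ, 0 < ε → luxNorm Aexp2 f ≤ ε := fun ε hε =>
      csInf_le hbdd ⟨hε, hIle ε hε⟩
    have h0 : luxNorm Aexp2 f ≤ 0 := by
      by_contra hcon
      push_neg at hcon
      linarith [hle (luxNorm Aexp2 f / 2) (by linarith)]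
    calc luxNorm Aexp2 f ≤ 0 := h0
      _ ≤ 10000 * Real.sqrt (sobNormSq f) := by positivity
  · obtain ⟨hInt, hIle⟩ := Trud.main_bound f hf2 hsum hS
    have hlpos : (0:ℝ) < 10000 * Real.sqrt (sobNormSq f) := by
      have := Real.sqrt_pos.mpr hS
      linarith
    refine ⟨⟨hf2.aestronglyMeasurable, _, hlpos, hInt, hIle⟩, ?_⟩
    exact csInf_le hbdd ⟨hlpos, hIle⟩
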